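/- (∛n)⁻¹-Theorem: Let C be a contraction on a Hilbert space H satisfying ‖C^n (1 - C)‖ ≤ K/(n+1) for all n ∈ ℕ. Then ‖C^n - exp(n(C - 1))‖ ≤ (2K + 2)/n^{1/3} for all n ≥ 1. -/

import Mathlib

/-!
Since `exp (n (C - 1)) = ∑ₖ e⁻ⁿ nᵏ / k! • Cᵏ`, the difference `Cⁿ - exp (n (C - 1))` is the
average of `Cⁿ - Cᵏ` over a Poisson(n)-distributed `k`. The Ritt condition telescopes to
`‖Cⁿ - Cᵏ‖ ≤ K |k - n| / (min n k + 1)`, which is small when `|k - n| ≤ t`; otherwise the trivial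
bound `2` is at most `2 (k - n)² / t²`. Averaging against the Poisson variance `n` gives
`K t / (n - t + 1) + 2 n / t²`, and `t = n^{2/3}` makes both terms of order `n^{-1/3}`.
-/

open NormedSpace
open scoped Nat

noncomputable def poissonWeight (x : ℝ) (k : ℕ) : ℝ := Real.exp (-x) * x ^ k / k !

lemma poissonWeight_nonneg {x : ℝ} (hx : 0 ≤ x) (k : ℕ) : 0 ≤ poissonWeight x k := by
  unfold poissonWeight; positivity

lemma poissonWeight_succ_mul (x : ℝ) (k : ℕ) :
    poissonWeight x (k + 1) * (k + 1) = x * poissonWeight x k := by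
  simp only [poissonWeight, Nat.factorial_succ, Nat.cast_mul, Nat.cast_succ, pow_succ]
  field_simp

lemma hasSum_poissonWeight (x : ℝ) : HasSum (poissonWeight x) 1 := by
  have h := (expSeries_div_hasSum_exp x).mul_left (Real.exp (-x))
  rw [← Real.exp_eq_exp_ℝ, ← Real.exp_add, neg_add_cancel, Real.exp_zero] at h
  exact h.congr_fun fun k => mul_div_assoc _ _ _

/-- The Stein–Chen identity `𝔼[N g(N)] = x 𝔼[g(N + 1)]` for `N ∼ Poisson(x)`. -/
lemma HasSum.poissonWeight_mul_natCast_mul {x : ℝ} {g : ℕ → ℝ} {a : ℝ}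
    (h : HasSum (fun k => poissonWeight x k * g (k + 1)) a) :
    HasSum (fun k => poissonWeight x k * (k * g k)) (x * a) := by
  rw [← hasSum_nat_add_iff' 1]
  simpa [← mul_assoc, poissonWeight_succ_mul] using h.mul_left x

lemma hasSum_poissonWeight_mul_natCast (x : ℝ) :
    HasSum (fun k => poissonWeight x k * k) x := by
  simpa using ((hasSum_poissonWeight x).mul_right 1).poissonWeight_mul_natCast_mul (g := 1)

lemma hasSum_poissonWeight_mul_sq_sub (x : ℝ) :
    HasSum (fun k => poissonWeight x k * ((k : ℝ) - x) ^ 2) x := by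
  have hmass := hasSum_poissonWeight x
  have hmean := hasSum_poissonWeight_mul_natCast x
  have hsq : HasSum (fun k => poissonWeight x k * (k * k)) (x * (x + 1)) := by
    refine HasSum.poissonWeight_mul_natCast_mul ?_
    simpa [mul_add] using hmean.add hmass
  have h := (hsq.sub (hmean.mul_left (2 * x))).add (hmass.mul_left (x ^ 2))
  rw [show x * (x + 1) - 2 * x * x + x ^ 2 * 1 = x by ring] at h
  exact h.congr_fun fun k => by ring

lemma hasSum_poissonWeight_smul_pow_exp {A : Type*} [NormedRing A] [NormedAlgebra ℝ A]
    [CompleteSpace A] (x : ℝ) (a : A) :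
    HasSum (fun k => poissonWeight x k • a ^ k) (exp (x • (a - 1))) := by
  have hsplit : x • (a - 1) = algebraMap ℝ A (-x) + x • a := by
    rw [Algebra.algebraMap_eq_smul_one, smul_sub]
    module
  have hcomm : Commute (algebraMap ℝ A (-x)) (x • a) := Algebra.commutes _ _
  rw [hsplit, exp_add_of_commute_of_mem_ball (𝕂 := ℝ) hcomm
    ((expSeries_radius_eq_top ℝ A).symm ▸ edist_lt_top _ _)
    ((expSeries_radius_eq_top ℝ A).symm ▸ edist_lt_top _ _), ← algebraMap_exp_comm,
    ← Real.exp_eq_exp_ℝ, ← Algebra.smul_def]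
  refine ((exp_series_hasSum_exp' (𝕂 := ℝ) (x • a)).const_smul (Real.exp (-x))).congr_fun
    fun k => ?_
  rw [smul_pow, smul_smul, smul_smul, poissonWeight]
  congr 1
  field_simp

section RittCondition

variable {A : Type*} [NormedRing A] {a : A} {K : ℝ}

def RittWith (K : ℝ) (a : A) : Prop := ∀ n : ℕ, ‖a ^ n * (1 - a)‖ ≤ K / (n + 1)

lemma RittWith.nonneg (hRitt : RittWith K a) : 0 ≤ K := by
  simpa using (norm_nonneg _).trans (hRitt 0)

lemma norm_pow_sub_pow_add_le (hRitt : RittWith K a) (m d : ℕ) :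
    ‖a ^ m - a ^ (m + d)‖ ≤ K * d / (m + 1) := by
  have hK := hRitt.nonneg
  have htele : ∑ i ∈ Finset.range d, a ^ (m + i) * (1 - a) = a ^ m - a ^ (m + d) := by
    simpa [mul_sub, ← pow_succ, add_assoc] using Finset.sum_range_sub' (fun i => a ^ (m + i)) d
  calc ‖a ^ m - a ^ (m + d)‖ ≤ ∑ i ∈ Finset.range d, ‖a ^ (m + i) * (1 - a)‖ :=
        htele ▸ norm_sum_le _ _
    _ ≤ ∑ _i ∈ Finset.range d, K / (m + 1) := by
        gcongr with i
        refine (hRitt (m + i)).trans ?_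
        gcongr
        simp
    _ = K * d / (m + 1) := by simp; ring

lemma norm_pow_sub_pow_le (hRitt : RittWith K a) (n k : ℕ) :
    ‖a ^ n - a ^ k‖ ≤ K * |(k : ℝ) - n| / (min n k + 1) := by
  rcases le_total n k with h | h
  · obtain ⟨d, rfl⟩ := Nat.exists_eq_add_of_le h
    simpa using norm_pow_sub_pow_add_le hRitt n d
  · obtain ⟨d, rfl⟩ := Nat.exists_eq_add_of_le h
    simpa [norm_sub_rev, abs_sub_comm] using norm_pow_sub_pow_add_le hRitt k d

/-- For `|k - n| ≤ t` the Ritt condition gives the constant term; otherwise the crude bound `2` is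
absorbed by the quadratic term. -/
lemma norm_pow_sub_pow_le_add_sq (hpow : ∀ k : ℕ, ‖a ^ k‖ ≤ 1) (hRitt : RittWith K a)
    {n : ℕ} {t : ℝ} (ht : 0 < t) (htn : t ≤ n) (k : ℕ) :
    ‖a ^ n - a ^ k‖ ≤ K * t / (n - t + 1) + 2 / t ^ 2 * ((k : ℝ) - n) ^ 2 := by
  have hK := hRitt.nonneg
  by_cases hkn : |(k : ℝ) - n| ≤ t
  · have hmin : (n : ℝ) - t + 1 ≤ min n k + 1 := by
      have := neg_abs_le ((k : ℝ) - n)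
      push_cast
      gcongr
      exact le_min (by linarith) (by linarith)
    calc ‖a ^ n - a ^ k‖ ≤ K * |(k : ℝ) - n| / (min n k + 1) := norm_pow_sub_pow_le hRitt n k
      _ ≤ K * t / (n - t + 1) := by gcongr
      _ ≤ _ := le_add_of_nonneg_right (by positivity)
  · calc ‖a ^ n - a ^ k‖ ≤ 1 + 1 := (norm_sub_le _ _).trans (add_le_add (hpow n) (hpow k))
      _ = 2 / t ^ 2 * t ^ 2 := by field_simp; norm_num
      _ ≤ 2 / t ^ 2 * |(k : ℝ) - n| ^ 2 := by gcongr; exact (not_le.mp hkn).le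
      _ = 2 / t ^ 2 * ((k : ℝ) - n) ^ 2 := by rw [sq_abs]
      _ ≤ _ := le_add_of_nonneg_left (by positivity)

lemma norm_pow_sub_exp_le [NormedAlgebra ℝ A] [CompleteSpace A] (hpow : ∀ k : ℕ, ‖a ^ k‖ ≤ 1)
    (hRitt : RittWith K a) {n : ℕ} {t : ℝ} (ht : 0 < t) (htn : t ≤ n) :
    ‖a ^ n - exp ((n : ℝ) • (a - 1))‖ ≤ K * t / (n - t + 1) + 2 * n / t ^ 2 := by
  have hdiff : HasSum (fun k => poissonWeight n k • (a ^ n - a ^ k))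
      (a ^ n - exp ((n : ℝ) • (a - 1))) := by
    simpa [smul_sub] using
      ((hasSum_poissonWeight n).smul_const (a ^ n)).sub (hasSum_poissonWeight_smul_pow_exp n a)
  have hmoments : HasSum (fun k => poissonWeight n k *
      (K * t / (n - t + 1) + 2 / t ^ 2 * ((k : ℝ) - n) ^ 2))
      (K * t / (n - t + 1) + 2 * n / t ^ 2) := by
    have h := ((hasSum_poissonWeight n).mul_left (K * t / (n - t + 1))).add
      ((hasSum_poissonWeight_mul_sq_sub n).mul_left (2 / t ^ 2))
    rw [mul_one, ← mul_div_right_comm] at h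
    exact h.congr_fun fun k => by ring
  refine hdiff.norm_le_of_bounded hmoments fun k => ?_
  rw [norm_smul, Real.norm_of_nonneg (poissonWeight_nonneg n.cast_nonneg k)]
  exact mul_le_mul_of_nonneg_left (norm_pow_sub_pow_le_add_sq hpow hRitt ht htn k)
    (poissonWeight_nonneg n.cast_nonneg k)

lemma norm_pow_sub_exp_le_of_cube [NormedAlgebra ℝ A] [CompleteSpace A]
    (hpow : ∀ k : ℕ, ‖a ^ k‖ ≤ 1) (hRitt : RittWith K a) {n : ℕ} {s : ℝ} (hs : 1 ≤ s)
    (hn : (n : ℝ) = s ^ 3) :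
    ‖a ^ n - exp ((n : ℝ) • (a - 1))‖ ≤ (2 * K + 2) / s := by
  have hK := hRitt.nonneg
  have hsn : s ^ 2 ≤ n := hn ▸ pow_le_pow_right₀ hs (by norm_num)
  refine (norm_pow_sub_exp_le hpow hRitt (by positivity) hsn).trans ?_
  have hden : 0 < s ^ 3 - s ^ 2 + 1 := by nlinarith
  -- `s³ - 2s² + 2` attains its minimum `22/27` on `[1, ∞)` at `s = 4/3`.
  have hcubic : s ^ 3 ≤ 2 * (s ^ 3 - s ^ 2 + 1) := by
    nlinarith [mul_nonneg (by positivity : (0 : ℝ) ≤ s) (sq_nonneg (s - 4 / 3))]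
  calc K * s ^ 2 / (n - s ^ 2 + 1) + 2 * n / (s ^ 2) ^ 2
      = K * s ^ 2 / (s ^ 3 - s ^ 2 + 1) + 2 / s := by rw [hn]; field_simp
    _ ≤ 2 * K / s + 2 / s := by
        gcongr ?_ + _
        rw [div_le_div_iff₀ hden (by positivity)]
        nlinarith
    _ = (2 * K + 2) / s := by ring

end RittCondition

theorem inv_cbrt_n_theorem_general {H : Type*} [NormedAddCommGroup H] [InnerProductSpace ℝ H]
    [CompleteSpace H] (C : H →L[ℝ] H) (hC : ‖C‖ ≤ 1) (K : ℝ)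
    (hRitt : ∀ n : ℕ, ‖C ^ n * (1 - C)‖ ≤ K / (n + 1)) (n : ℕ) (hn : 1 ≤ n) :
    ‖C ^ n - exp ((n : ℝ) • (C - 1))‖ ≤ (2 * K + 2) / (n : ℝ) ^ ((1 : ℝ) / 3) := by
  have hpow (k : ℕ) : ‖C ^ k‖ ≤ 1 := by
    rcases k.eq_zero_or_pos with rfl | hk
    · exact ContinuousLinearMap.norm_id_le
    · exact (norm_pow_le' C hk).trans (pow_le_one₀ (norm_nonneg _) hC)
  have hcbrt : 1 ≤ (n : ℝ) ^ ((1 : ℝ) / 3) := Real.one_le_rpow (by exact_mod_cast hn) (by norm_num)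
  have hcube : (n : ℝ) = ((n : ℝ) ^ ((1 : ℝ) / 3)) ^ 3 := by
    rw [← Real.rpow_natCast, ← Real.rpow_mul n.cast_nonneg]
    norm_num
  exact norm_pow_sub_exp_le_of_cube hpow hRitt hcbrt hcube

theorem inv_cbrt_n_theorem {H : Type*} [NormedAddCommGroup H] [InnerProductSpace ℝ H]
    [CompleteSpace H] (C : H →L[ℝ] H) (hC : ‖C‖ ≤ 1) (K : ℝ) (hK : 0 < K)
    (hRitt : ∀ n : ℕ, ‖C ^ n * (1 - C)‖ ≤ K / (n + 1)) (n : ℕ) (hn : 1 ≤ n) :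
    ‖C ^ n - exp ((n : ℝ) • (C - 1))‖ ≤ (2 * K + 2) / (n : ℝ) ^ ((1 : ℝ) / 3) :=
  inv_cbrt_n_theorem_general C hC K hRitt n hn
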